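/- With N = R₁R₂, gcd(R₁,R₂) = 1, idempotents e₁, e₂, and χ the multiplicative character on Z/N corresponding to the pair (χ₁, χ₂): the N-point DFT satisfies χ̂(a₁e₁ + a₂e₂) = χ̂₁(a₁·e₁/R₂)·χ̂₂(a₂·e₂/R₁) for all a₁ ∈ Z/R₁, a₂ ∈ Z/R₂, where e₁/R₂ is a unit in Z/R₁ and e₂/R₁ is a unit in Z/R₂. -/

import Mathlib

/-!
The DFT kernel is the standard additive character `ψ_N (a * b)`, and `ψ_N (R₂ * y) = ψ_{R₁} y`
for `N = R₁ * R₂`. Since `R₂ ∣ e₁` and `R₁ ∣ e₂`, the point `a₁ e₁ + a₂ e₂` equals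
`R₂ (a₁ c₁) + R₁ (a₂ c₂)` with `c₁ = e₁ / R₂`, `c₂ = e₂ / R₁`, so the kernel at `b` factors as
`ψ_{R₁} (a₁ c₁ b₁) * ψ_{R₂} (a₂ c₂ b₂)` with `bᵢ = b mod Rᵢ`. As `χ b = χ₁ b₁ * χ₂ b₂` as well, the
Chinese remainder bijection `b ↦ (b₁, b₂)` turns the `N`-point sum into the product of the two
smaller ones. Finally `R₂ c₁ = e₁ ≡ 1 [MOD R₁]`, so `c₁` is a unit mod `R₁`, and likewise `c₂`.
-/

open Finset

/-- The `N`-point discrete Fourier transform of `x : ZMod N → ℂ`. -/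
noncomputable def dft {N : ℕ} [NeZero N] (x : ZMod N → ℂ) (a : ZMod N) : ℂ :=
  ∑ b : ZMod N, x b * Complex.exp (2 * Real.pi * Complex.I * ((a.val * b.val : ℕ) : ℂ) / (N : ℂ))

theorem dft_eq_sum_stdAddChar {N : ℕ} [NeZero N] (x : ZMod N → ℂ) (a : ZMod N) :
    dft x a = ∑ b : ZMod N, x b * ZMod.stdAddChar (a * b) := by
  refine Finset.sum_congr rfl fun b _ ↦ ?_
  rw [ZMod.stdAddChar_apply, ← ZMod.toCircle_natCast, Nat.cast_mul, ZMod.natCast_zmod_val,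
    ZMod.natCast_zmod_val]

theorem ZMod.stdAddChar_natCast_mul {M N : ℕ} [NeZero M] [NeZero N] (k : ℕ) (hN : M * k = N)
    (y : ZMod N) :
    stdAddChar ((k : ZMod N) * y) = stdAddChar (castHom (Dvd.intro k hN) (ZMod M) y) := by
  subst hN
  have hk : (k : ℂ) ≠ 0 := by exact_mod_cast right_ne_zero_of_mul (NeZero.ne (M * k))
  rw [← natCast_zmod_val y, ← Nat.cast_mul, map_natCast (castHom _ (ZMod M)), stdAddChar_apply,
    stdAddChar_apply, toCircle_natCast, toCircle_natCast]
  congr 1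
  push_cast
  field_simp

theorem ZMod.sum_castHom_mul_castHom {R : Type*} [CommSemiring R] {R₁ R₂ : ℕ}
    [NeZero R₁] [NeZero R₂] (h : Nat.Coprime R₁ R₂) (f : ZMod R₁ → R) (g : ZMod R₂ → R) :
    ∑ b : ZMod (R₁ * R₂), f (castHom (dvd_mul_right R₁ R₂) _ b) *
        g (castHom (dvd_mul_left R₂ R₁) _ b) = (∑ b₁, f b₁) * ∑ b₂, g b₂ := by
  rw [Fintype.sum_mul_sum, ← Fintype.sum_prod_type']
  refine Fintype.sum_equiv (chineseRemainder h).toEquiv _ _ fun b ↦ ?_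
  have hcrt : chineseRemainder h b =
      (castHom (dvd_mul_right R₁ R₂) _ b, castHom (dvd_mul_left R₂ R₁) _ b) :=
    Prod.ext (Prod.fst_zmod_cast b) (Prod.snd_zmod_cast b)
  rw [RingEquiv.toEquiv_eq_coe, RingEquiv.coe_toEquiv, hcrt]

theorem dft_natCast_add_of_eq_mul_castHom {R₁ R₂ : ℕ} [NeZero R₁] [NeZero R₂]
    (h : Nat.Coprime R₁ R₂) {x : ZMod (R₁ * R₂) → ℂ} {x₁ : ZMod R₁ → ℂ} {x₂ : ZMod R₂ → ℂ}
    (hx : ∀ b, x b =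
      x₁ (ZMod.castHom (dvd_mul_right R₁ R₂) _ b) * x₂ (ZMod.castHom (dvd_mul_left R₂ R₁) _ b))
    (c₁ c₂ : ℕ) (a₁ : ZMod R₁) (a₂ : ZMod R₂) :
    dft x ((a₁.val * (R₂ * c₁) + a₂.val * (R₁ * c₂) : ℕ) : ZMod (R₁ * R₂)) =
      dft x₁ (a₁ * c₁) * dft x₂ (a₂ * c₂) := by
  rw [dft_eq_sum_stdAddChar, dft_eq_sum_stdAddChar, dft_eq_sum_stdAddChar,
    ← ZMod.sum_castHom_mul_castHom h]
  refine Finset.sum_congr rfl fun b _ ↦ ?_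
  have hsplit : ((a₁.val * (R₂ * c₁) + a₂.val * (R₁ * c₂) : ℕ) : ZMod (R₁ * R₂)) * b =
      (R₂ : ZMod (R₁ * R₂)) * ((a₁.val * c₁ : ℕ) * b) +
        (R₁ : ZMod (R₁ * R₂)) * ((a₂.val * c₂ : ℕ) * b) := by
    push_cast; ring
  rw [hx, hsplit, AddChar.map_add_eq_mul, ZMod.stdAddChar_natCast_mul R₂ rfl,
    ZMod.stdAddChar_natCast_mul R₁ (mul_comm R₂ R₁)]
  simp only [map_mul, map_natCast, Nat.cast_mul, ZMod.natCast_zmod_val]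
  ring

theorem isUnit_natCast_div_of_mod_eq_one {M d e : ℕ} (hd : d ∣ e) (he : e % M = 1 % M) :
    IsUnit ((e / d : ℕ) : ZMod M) := by
  refine .of_mul_eq_one (d : ZMod M) ?_
  rw [← Nat.cast_mul, Nat.div_mul_cancel hd, ← Nat.cast_one, ZMod.natCast_eq_natCast_iff', he]

theorem stmt5 (R₁ R₂ : ℕ) [NeZero R₁] [NeZero R₂] (h : Nat.Coprime R₁ R₂)
    (e₁ e₂ : ℕ)
    (he₁₁ : e₁ % R₁ = 1 % R₁) (he₁₂ : e₁ % R₂ = 0)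
    (he₂₁ : e₂ % R₁ = 0) (he₂₂ : e₂ % R₂ = 1 % R₂)
    (χ₁ : MulChar (ZMod R₁) ℂ) (χ₂ : MulChar (ZMod R₂) ℂ)
    (χ : MulChar (ZMod (R₁ * R₂)) ℂ)
    (hχ : ∀ a : ZMod (R₁ * R₂),
      χ a = χ₁ (ZMod.castHom (dvd_mul_right R₁ R₂) (ZMod R₁) a) *
            χ₂ (ZMod.castHom (dvd_mul_left R₂ R₁) (ZMod R₂) a)) :
    IsUnit ((e₁ / R₂ : ℕ) : ZMod R₁) ∧ IsUnit ((e₂ / R₁ : ℕ) : ZMod R₂) ∧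
    ∀ (a₁ : ZMod R₁) (a₂ : ZMod R₂),
      dft ⇑χ ((a₁.val * e₁ + a₂.val * e₂ : ℕ) : ZMod (R₁ * R₂)) =
        dft ⇑χ₁ (a₁ * ((e₁ / R₂ : ℕ) : ZMod R₁)) *
          dft ⇑χ₂ (a₂ * ((e₂ / R₁ : ℕ) : ZMod R₂)) := by
  have hd₁ : R₂ ∣ e₁ := Nat.dvd_of_mod_eq_zero he₁₂
  have hd₂ : R₁ ∣ e₂ := Nat.dvd_of_mod_eq_zero he₂₁
  refine ⟨isUnit_natCast_div_of_mod_eq_one hd₁ he₁₁, isUnit_natCast_div_of_mod_eq_one hd₂ he₂₂,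
    fun a₁ a₂ ↦ ?_⟩
  conv_lhs => rw [← Nat.mul_div_cancel' hd₁, ← Nat.mul_div_cancel' hd₂]
  exact dft_natCast_add_of_eq_mul_castHom h hχ _ _ a₁ a₂
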